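/- arXiv:2008.12503 — 5 statements merged into one kernel-verified Lean document; each statement's English description precedes it below -/
import Mathlib

section
/- A squarefree multilinear polynomial Q in variables x_1, x_{-1}, ..., x_n, x_{-n} over the reals is a polynomial in the variables y_k = x_k + x_{-k} (k = 1, ..., n) if and only if for every k in {1, ..., n}, the partial derivative of Q with respect to x_k equals the partial derivative of Q with respect to x_{-k}. -/
/-!
Write `y_k = x_{k,+} + x_{k,-}`. Since `∂y_l/∂x_{k,±}` does not depend on the sign, the forward
direction is the chain rule. Conversely, for multilinear `Q` with `∂Q/∂x_{k,+} = ∂Q/∂x_{k,-}`, put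
`B = ∂Q/∂x_{k,+}` and `A = Q - y_k B`. Multilinearity makes both partial derivatives of `B` in
the `k`-th pair vanish, hence also those of `A`; and `A`, `B` inherit multilinearity and the
symmetry of the derivatives, because partial derivatives commute. So `Q = A + y_k B` with `A`, `B`
free of the `k`-th pair, and induction on the set of pairs occurring in `Q` finishes the proof.
-/

open MvPolynomial

namespace MvPolynomial

variable {σ R : Type*}

section CommSemiring

variable [CommSemiring R] {i : σ} {p : MvPolynomial σ R}

theorem add_single_mem_support_of_mem_support_pderiv {m : σ →₀ ℕ}
    (h : m ∈ (pderiv i p).support) : m + Finsupp.single i 1 ∈ p.support := by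
  rw [mem_support_iff, coeff_pderiv] at *
  exact left_ne_zero_of_mul h

theorem pderiv_mem_restrictDegree {d : ℕ} (hp : p ∈ restrictDegree σ R d) :
    pderiv i p ∈ restrictDegree σ R d := by
  rw [mem_restrictDegree] at *
  intro m hm j
  exact le_trans (by simp) (hp _ (add_single_mem_support_of_mem_support_pderiv hm) j)

theorem notMem_vars_pderiv_self (hp : p ∈ restrictDegree σ R 1) : i ∉ (pderiv i p).vars := by
  rw [mem_vars_iff_mem_support]
  rintro ⟨m, hm, hmi⟩
  have := (mem_restrictDegree _ _ _).1 hp _ (add_single_mem_support_of_mem_support_pderiv hm) i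
  simp only [Finsupp.coe_add, Pi.add_apply, Finsupp.single_eq_same, add_le_iff_nonpos_left,
    nonpos_iff_eq_zero] at this
  exact Finsupp.mem_support_iff.1 hmi this

theorem pderiv_pderiv_self_eq_zero (hp : p ∈ restrictDegree σ R 1) :
    pderiv i (pderiv i p) = 0 :=
  pderiv_eq_zero_of_notMem_vars (notMem_vars_pderiv_self hp)

theorem notMem_vars_of_pderiv_eq_zero (hp : p ∈ restrictDegree σ R 1) (h : pderiv i p = 0) :
    i ∉ p.vars := by
  rw [mem_vars_iff_mem_support]
  rintro ⟨m, hm, hmi⟩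
  have hmi : m i = 1 := le_antisymm ((mem_restrictDegree _ _ _).1 hp m hm i)
    (Nat.one_le_iff_ne_zero.2 (Finsupp.mem_support_iff.1 hmi))
  have hm' : m - Finsupp.single i 1 + Finsupp.single i 1 = m :=
    tsub_add_cancel_of_le (by simp [hmi])
  have hcoeff := congr(coeff (m - Finsupp.single i 1) $h)
  rw [coeff_pderiv, hm', coeff_zero] at hcoeff
  exact mem_support_iff.1 hm (by simpa [hmi] using hcoeff)

theorem X_mul_mem_restrictDegree_one (hp : p ∈ restrictDegree σ R 1) (hi : i ∉ p.vars) :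
    X i * p ∈ restrictDegree σ R 1 := by
  classical
  rw [mem_restrictDegree, support_X_mul]
  simp only [Finset.mem_map, addLeftEmbedding_apply, forall_exists_index, and_imp]
  rintro _ m hm rfl j
  rw [mem_vars_iff_mem_support] at hi
  rcases eq_or_ne j i with rfl | hj
  · have : m j = 0 := by simpa using fun h => hi ⟨m, hm, h⟩
    simp [this]
  · simpa [Finsupp.single_apply, hj.symm] using (mem_restrictDegree _ _ _).1 hp m hm j

theorem pderiv_aeval_eq_of_forall_pderiv_eq {ι : Type*} {j : σ} (y : ι → MvPolynomial σ R)
    (h : ∀ k, pderiv i (y k) = pderiv j (y k)) (P : MvPolynomial ι R) :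
    pderiv i (aeval y P) = pderiv j (aeval y P) := by
  induction P using MvPolynomial.induction_on with
  | C a => simp
  | add p q hp hq => simp only [map_add, hp, hq]
  | mul_X p k hp => simp only [map_mul, aeval_X, pderiv_mul, hp, h]

end CommSemiring

theorem pderiv_pderiv_comm [CommRing R] (i j : σ) (p : MvPolynomial σ R) :
    pderiv i (pderiv j p) = pderiv j (pderiv i p) := by
  have h : ⁅pderiv i, pderiv j⁆ = (0 : Derivation R (MvPolynomial σ R) (MvPolynomial σ R)) :=
    derivation_ext fun k => by
      classical
      rw [Derivation.commutator_apply]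
      simp [pderiv_X, Pi.single_apply, apply_ite]
  have := congr($h p)
  rw [Derivation.commutator_apply] at this
  simpa [sub_eq_zero] using this

section PairSum

variable {ι : Type*} (R : Type*) [CommRing R]

noncomputable def pairSum (k : ι) : MvPolynomial (ι × Bool) R := X (k, true) + X (k, false)

variable {R}

theorem pderiv_pairSum [DecidableEq ι] (v : ι × Bool) (k : ι) :
    pderiv v (pairSum R k) = if v.1 = k then 1 else 0 := by
  obtain ⟨l, b⟩ := v
  rcases eq_or_ne l k with rfl | hlk
  · cases b <;> simp [pairSum]
  · simp [pairSum, hlk, hlk.symm]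

theorem pderiv_aeval_pairSum (P : MvPolynomial ι R) (k : ι) :
    pderiv (k, true) (aeval (pairSum R) P) = pderiv (k, false) (aeval (pairSum R) P) :=
  pderiv_aeval_eq_of_forall_pderiv_eq _ (fun l => by classical simp only [pderiv_pairSum]) P

variable {Q : MvPolynomial (ι × Bool) R}

theorem pderiv_pderiv_pair_eq_zero (hQ : Q ∈ restrictDegree (ι × Bool) R 1)
    (hsymm : ∀ k, pderiv (k, true) Q = pderiv (k, false) Q) (k : ι) (b : Bool) :
    pderiv (k, b) (pderiv (k, true) Q) = 0 := by
  cases b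
  · rw [hsymm, pderiv_pderiv_self_eq_zero hQ]
  · exact pderiv_pderiv_self_eq_zero hQ

theorem pderiv_sub_pairSum_mul [DecidableEq ι] (B : MvPolynomial (ι × Bool) R) (k : ι)
    (v : ι × Bool) :
    pderiv v (Q - pairSum R k * B) =
      pderiv v Q - (if v.1 = k then B else 0) - pairSum R k * pderiv v B := by
  rw [map_sub, pderiv_mul, pderiv_pairSum]
  split_ifs <;> ring

theorem sub_pairSum_mul_pderiv_mem_restrictDegree (hQ : Q ∈ restrictDegree (ι × Bool) R 1)
    (hsymm : ∀ k, pderiv (k, true) Q = pderiv (k, false) Q) (k : ι) :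
    Q - pairSum R k * pderiv (k, true) Q ∈ restrictDegree (ι × Bool) R 1 := by
  rw [pairSum, add_mul]
  refine Submodule.sub_mem _ hQ (Submodule.add_mem _ ?_ ?_)
  · exact X_mul_mem_restrictDegree_one (pderiv_mem_restrictDegree hQ) (notMem_vars_pderiv_self hQ)
  · rw [hsymm k]
    exact X_mul_mem_restrictDegree_one (pderiv_mem_restrictDegree hQ) (notMem_vars_pderiv_self hQ)

theorem exists_aeval_pairSum_eq_of_pderiv_eq_zero (s : Finset ι)
    (hQ : Q ∈ restrictDegree (ι × Bool) R 1)
    (hsymm : ∀ k, pderiv (k, true) Q = pderiv (k, false) Q)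
    (hzero : ∀ k ∉ s, ∀ b, pderiv (k, b) Q = 0) :
    ∃ P : MvPolynomial ι R, aeval (pairSum R) P = Q := by
  classical
  induction s using Finset.induction_on generalizing Q with
  | empty =>
    have hvars : Q.vars = ∅ := Finset.eq_empty_of_forall_notMem fun v =>
      notMem_vars_of_pderiv_eq_zero hQ (hzero v.1 (Finset.notMem_empty _) v.2)
    exact ⟨C (coeff 0 Q), by rw [aeval_C, algebraMap_eq, ← vars_eq_empty_iff_eq_C.1 hvars]⟩
  | @insert k s hk ih =>
    set B := pderiv (k, true) Q with hB
    have hBsymm : ∀ l, pderiv (l, true) B = pderiv (l, false) B := fun l => by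
      rw [hB, pderiv_pderiv_comm, hsymm, pderiv_pderiv_comm]
    have hBzero : ∀ l ∉ s, ∀ b, pderiv (l, b) B = 0 := fun l hl b => by
      rcases eq_or_ne l k with rfl | hlk
      · exact pderiv_pderiv_pair_eq_zero hQ hsymm l b
      · rw [hB, pderiv_pderiv_comm, hzero l (by simp [hl, hlk]), map_zero]
    obtain ⟨PB, hPB⟩ := ih (pderiv_mem_restrictDegree hQ) hBsymm hBzero
    obtain ⟨PA, hPA⟩ := ih (Q := Q - pairSum R k * B)
      (sub_pairSum_mul_pderiv_mem_restrictDegree hQ hsymm k)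
      (fun l => by simp only [pderiv_sub_pairSum_mul, hsymm, hBsymm])
      fun l hl b => by
        rw [pderiv_sub_pairSum_mul, hBzero l hl b]
        rcases eq_or_ne l k with rfl | hlk
        · cases b <;> simp [← hsymm, hB]
        · simp [hzero l (by simp [hl, hlk]), hlk]
    exact ⟨PA + X k * PB, by rw [map_add, map_mul, aeval_X, hPA, hPB]; ring⟩

theorem exists_aeval_pairSum_eq_iff (hQ : Q ∈ restrictDegree (ι × Bool) R 1) :
    (∃ P : MvPolynomial ι R, aeval (pairSum R) P = Q) ↔
      ∀ k, pderiv (k, true) Q = pderiv (k, false) Q := by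
  classical
  refine ⟨fun ⟨P, hP⟩ k => hP ▸ pderiv_aeval_pairSum P k, fun hsymm => ?_⟩
  refine exists_aeval_pairSum_eq_of_pderiv_eq_zero (Q.vars.image Prod.fst) hQ hsymm ?_
  exact fun k hk b => pderiv_eq_zero_of_notMem_vars fun h => hk (Finset.mem_image_of_mem _ h)

end PairSum

end MvPolynomial

/-- A squarefree (multilinear) polynomial `Q` in the variables
`x_{k,+}, x_{k,-}` (`k = 1,…,n`) is a polynomial in the variables
`y_k = x_{k,+} + x_{k,-}` iff `∂Q/∂x_{k,+} = ∂Q/∂x_{k,-}` for all `k`. -/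
theorem stmt_0 (n : ℕ) (Q : MvPolynomial (Fin n × Bool) ℝ)
    (hsf : ∀ m ∈ Q.support, ∀ v, m v ≤ 1) :
    (∃ P : MvPolynomial (Fin n) ℝ,
        Q = aeval (fun k : Fin n => (X (k, true) + X (k, false) : MvPolynomial (Fin n × Bool) ℝ)) P)
      ↔ ∀ k : Fin n, pderiv (k, true) Q = pderiv (k, false) Q := by
  simp only [eq_comm (a := Q)]
  exact exists_aeval_pairSum_eq_iff ((mem_restrictDegree _ _ _).2 hsf)
end

section
/- Let w be a homogeneous squarefree polynomial of degree i in R[x_1, x_{-1}, ..., x_n, x_{-n}] that is symmetric under the involution swapping x_k and x_{-k} for each k, and suppose that for every variable x_v the partial derivative ∂w/∂x_v is also symmetric under this involution. Then w can be written as a linear combination of products ∏_{k∈τ} (x_k + x_{-k}) over subsets τ ⊆ {1,...,n} of size i. -/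
open MvPolynomial

/-!
The involution turns the symmetry of `∂w/∂x_k` into `∂w/∂x_{-k} = ∂w/∂x_k`. Comparing
coefficients in this identity, and using that `w` is squarefree, replacing a factor `x_{-k}` of a
monomial by `x_k` does not change its coefficient in `w`, and no monomial of `w` contains both
`x_k` and `x_{-k}`. So the monomials of `w` are exactly the terms of the expansions of the
products `∏_{k ∈ τ} (x_k + x_{-k})` with `|τ| = i`, each carrying the coefficient of
`∏_{k ∈ τ} x_k`.
-/

namespace MvPolynomial

section Generic

variable {σ R : Type*} [CommSemiring R]

theorem coeff_eq_zero_of_one_lt {p : MvPolynomial σ R} (hp : ∀ m ∈ p.support, ∀ v, m v ≤ 1)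
    {μ : σ →₀ ℕ} {v : σ} (h : 1 < μ v) : coeff μ p = 0 :=
  notMem_support_iff.mp fun hμ => (hp μ hμ v).not_gt h

theorem coeff_mapDomain_eq_of_forall_coeff_add_single {p : MvPolynomial σ R} {f : σ → σ}
    (h : ∀ ν a, coeff (ν + Finsupp.single a 1) p = coeff (ν + Finsupp.single (f a) 1) p)
    (μ : σ →₀ ℕ) : coeff (μ.mapDomain f) p = coeff μ p := by
  suffices ∀ ν, coeff (ν + μ) p = coeff (ν + μ.mapDomain f) p by simpa using (this 0).symm
  induction μ using Finsupp.induction_linear with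
  | zero => simp
  | add μ₁ μ₂ ih₁ ih₂ =>
    intro ν
    rw [Finsupp.mapDomain_add, ← add_assoc, ih₂, add_right_comm, ih₁, add_assoc,
      add_comm (μ₂.mapDomain f)]
  | single a b =>
    rw [Finsupp.mapDomain_single]
    induction b with
    | zero => simp
    | succ b ih =>
      intro ν
      rw [Finsupp.single_add, Finsupp.single_add, ← add_assoc, h, add_right_comm, ih,
        add_right_comm, add_assoc]

end Generic

section Signed

variable {ι R : Type*} [CommSemiring R]

theorem pderiv_false_eq_pderiv_true {w : MvPolynomial (ι × Bool) R} (k : ι)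
    (hsym : rename (fun v : ι × Bool => (v.1, !v.2)) w = w)
    (hdsym : rename (fun v : ι × Bool => (v.1, !v.2)) (pderiv (k, true) w) = pderiv (k, true) w) :
    pderiv (k, false) w = pderiv (k, true) w := by
  have hinj : Function.Injective fun v : ι × Bool => (v.1, !v.2) :=
    Function.Involutive.injective fun v => by simp
  calc pderiv (k, false) w = pderiv (k, false) (rename (fun v : ι × Bool => (v.1, !v.2)) w) := by
        rw [hsym]
    _ = pderiv (k, true) w := by rw [← hdsym]; exact pderiv_rename hinj (k, true) w

variable [NoZeroDivisors R] [CharZero R] {w : MvPolynomial (ι × Bool) R}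

theorem coeff_add_single_true_eq_false (hsf : ∀ m ∈ w.support, ∀ v, m v ≤ 1) {k : ι}
    (hd : pderiv (k, false) w = pderiv (k, true) w) (ν : ι × Bool →₀ ℕ) :
    coeff (ν + Finsupp.single (k, true) 1) w = coeff (ν + Finsupp.single (k, false) 1) w := by
  have key := congrArg (coeff ν) hd
  rw [coeff_pderiv, coeff_pderiv] at key
  by_cases ht : ν (k, true) = 0 <;> by_cases hf : ν (k, false) = 0
  · simpa [ht, hf] using key.symm
  · have h0 : coeff (ν + Finsupp.single (k, false) 1) w = 0 :=
      coeff_eq_zero_of_one_lt hsf (v := (k, false)) (by simp; omega)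
    rw [h0, zero_mul, eq_comm, mul_eq_zero] at key
    rw [h0]
    simpa [Nat.cast_add_one_ne_zero] using key
  · have h0 : coeff (ν + Finsupp.single (k, true) 1) w = 0 :=
      coeff_eq_zero_of_one_lt hsf (v := (k, true)) (by simp; omega)
    rw [h0, zero_mul, mul_eq_zero] at key
    rw [h0, eq_comm]
    simpa [Nat.cast_add_one_ne_zero] using key
  · rw [coeff_eq_zero_of_one_lt hsf (v := (k, true)) (by simp; omega),
      coeff_eq_zero_of_one_lt hsf (v := (k, false)) (by simp; omega)]

theorem coeff_mapDomain_fst_true (hsf : ∀ m ∈ w.support, ∀ v, m v ≤ 1)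
    (hd : ∀ k, pderiv (k, false) w = pderiv (k, true) w) (μ : ι × Bool →₀ ℕ) :
    coeff (μ.mapDomain fun v => (v.1, true)) w = coeff μ w := by
  refine coeff_mapDomain_eq_of_forall_coeff_add_single (fun ν ⟨k, b⟩ => ?_) μ
  cases b
  · exact (coeff_add_single_true_eq_false hsf (hd k) ν).symm
  · rfl

theorem coeff_eq_zero_of_both_signs (hsf : ∀ m ∈ w.support, ∀ v, m v ≤ 1)
    (hd : ∀ k, pderiv (k, false) w = pderiv (k, true) w) {μ : ι × Bool →₀ ℕ} {k : ι}
    (ht : μ (k, true) ≠ 0) (hf : μ (k, false) ≠ 0) : coeff μ w = 0 := by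
  obtain ⟨ν, rfl⟩ : ∃ ν, μ = ν + Finsupp.single (k, true) 1 :=
    ⟨μ - Finsupp.single (k, true) 1,
      (tsub_add_cancel_of_le (Finsupp.single_le_iff.mpr (Nat.one_le_iff_ne_zero.mpr ht))).symm⟩
  rw [coeff_add_single_true_eq_false hsf (hd k)]
  exact coeff_eq_zero_of_one_lt hsf (v := (k, false)) (by simp at hf ⊢; omega)

end Signed

section ChoiceExponent

variable {ι : Type*} [DecidableEq ι]

/-- With `(k, true)` for `x_k` and `(k, false)` for `x_{-k}`: the exponent of
`∏_{k ∈ σ} x_k ∏_{k ∈ τ \ σ} x_{-k}`, the term of `∏_{k ∈ τ} (x_k + x_{-k})` that picks `x_k`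
exactly for `k ∈ σ`. -/
noncomputable def choiceExponent (τ σ : Finset ι) : ι × Bool →₀ ℕ :=
  ∑ k ∈ σ, Finsupp.single (k, true) 1 + ∑ k ∈ τ \ σ, Finsupp.single (k, false) 1

theorem choiceExponent_apply_true (τ σ : Finset ι) (j : ι) :
    choiceExponent τ σ (j, true) = if j ∈ σ then 1 else 0 := by
  simp [choiceExponent, Finsupp.single_apply]

theorem choiceExponent_apply_false (τ σ : Finset ι) (j : ι) :
    choiceExponent τ σ (j, false) = if j ∈ τ \ σ then 1 else 0 := by
  simp [choiceExponent, Finsupp.single_apply]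

theorem prod_X_add_X_eq_sum_monomial {R : Type*} [CommSemiring R] (τ : Finset ι) :
    ∏ k ∈ τ, (X (k, true) + X (k, false) : MvPolynomial (ι × Bool) R) =
      ∑ σ ∈ τ.powerset, monomial (choiceExponent τ σ) 1 := by
  simp only [Finset.prod_add, X, ← monomial_sum_one, monomial_mul, one_mul, choiceExponent]

theorem mapDomain_fst_true_choiceExponent {τ σ : Finset ι} (h : σ ⊆ τ) :
    (choiceExponent τ σ).mapDomain (fun v => (v.1, true)) = choiceExponent τ τ := by
  simp only [choiceExponent, Finsupp.mapDomain_add, Finsupp.mapDomain_finsetSum,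
    Finsupp.mapDomain_single, Finset.sdiff_self, Finset.sum_empty, add_zero]
  exact (add_comm _ _).trans (Finset.sum_sdiff h)

theorem degree_choiceExponent {τ σ : Finset ι} (h : σ ⊆ τ) :
    (choiceExponent τ σ).degree = τ.card := by
  simp only [choiceExponent, map_add, map_sum, Finsupp.degree_single, Finset.sum_const,
    smul_eq_mul, mul_one]
  exact (add_comm _ _).trans (Finset.card_sdiff_add_card_eq_card h)

theorem choiceExponent_injective {τ σ τ' σ' : Finset ι} (h : σ ⊆ τ) (h' : σ' ⊆ τ')
    (he : choiceExponent τ σ = choiceExponent τ' σ') : τ = τ' ∧ σ = σ' := by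
  have hσ : σ = σ' := by
    ext j
    have := congrArg (· (j, true)) he
    simp only [choiceExponent_apply_true] at this
    split_ifs at this <;> simp_all
  subst hσ
  refine ⟨?_, rfl⟩
  ext j
  have := congrArg (· (j, false)) he
  simp only [choiceExponent_apply_false] at this
  by_cases hj : j ∈ σ
  · simp [h hj, h' hj]
  · split_ifs at this <;> simp_all

theorem exists_choiceExponent_eq [Fintype ι] {μ : ι × Bool →₀ ℕ} (hle : ∀ v, μ v ≤ 1)
    (hdisj : ∀ k, μ (k, true) = 0 ∨ μ (k, false) = 0) :
    ∃ τ σ : Finset ι, σ ⊆ τ ∧ choiceExponent τ σ = μ := by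
  refine ⟨({k | μ (k, true) = 1 ∨ μ (k, false) = 1} : Finset ι),
    ({k | μ (k, true) = 1} : Finset ι), fun k hk => by simp_all, ?_⟩
  ext ⟨j, b⟩
  have := hle (j, true); have := hle (j, false); have := hdisj j
  cases b <;> simp only [choiceExponent_apply_true, choiceExponent_apply_false, Finset.mem_sdiff,
    Finset.mem_filter, Finset.mem_univ, true_and] <;> split_ifs <;> omega

end ChoiceExponent

section Expansion

variable {ι R : Type*} [Fintype ι] [DecidableEq ι] [CommSemiring R] [NoZeroDivisors R]
  [CharZero R] {i : ℕ} {w : MvPolynomial (ι × Bool) R}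

theorem exists_choiceExponent_eq_of_mem_support (hhom : w.IsHomogeneous i)
    (hsf : ∀ m ∈ w.support, ∀ v, m v ≤ 1)
    (hd : ∀ k, pderiv (k, false) w = pderiv (k, true) w) {μ : ι × Bool →₀ ℕ}
    (hμ : μ ∈ w.support) :
    ∃ τ σ : Finset ι, τ.card = i ∧ σ ⊆ τ ∧ choiceExponent τ σ = μ := by
  obtain ⟨τ, σ, hστ, rfl⟩ := exists_choiceExponent_eq (hsf μ hμ) fun k => by
    by_contra! h
    exact mem_support_iff.mp hμ
      (coeff_eq_zero_of_both_signs hsf hd h.1 h.2)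
  refine ⟨τ, σ, ?_, hστ, rfl⟩
  rw [← degree_choiceExponent hστ, Finsupp.degree_eq_weight_one]
  exact hhom (mem_support_iff.mp hμ)

theorem eq_sum_smul_prod_X_add_X (hhom : w.IsHomogeneous i)
    (hsf : ∀ m ∈ w.support, ∀ v, m v ≤ 1)
    (hd : ∀ k, pderiv (k, false) w = pderiv (k, true) w) :
    w = ∑ τ ∈ Finset.univ.powersetCard i,
      coeff (choiceExponent τ τ) w • ∏ k ∈ τ, (X (k, true) + X (k, false)) := by
  set S := ((Finset.univ : Finset ι).powersetCard i).sigma Finset.powerset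
  have hS : ∀ p, p ∈ S ↔ p.1.card = i ∧ p.2 ⊆ p.1 := fun p => by
    simp only [S, Finset.mem_sigma, Finset.mem_powersetCard_univ, Finset.mem_powerset]
  have hinj : Set.InjOn (fun p : (_ : Finset ι) × Finset ι => choiceExponent p.1 p.2) S := by
    rintro ⟨τ, σ⟩ hp ⟨τ', σ'⟩ hp' he
    obtain ⟨rfl, rfl⟩ := choiceExponent_injective ((hS _).mp hp).2 ((hS _).mp hp').2 he
    rfl
  have hsupp : w.support ⊆ S.image fun p => choiceExponent p.1 p.2 := fun μ hμ => by
    obtain ⟨τ, σ, hτ, hστ, rfl⟩ := exists_choiceExponent_eq_of_mem_support hhom hsf hd hμ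
    exact Finset.mem_image_of_mem _ ((hS ⟨τ, σ⟩).mpr ⟨hτ, hστ⟩)
  calc w = ∑ μ ∈ w.support, monomial μ (coeff μ w) := w.as_sum
    _ = ∑ μ ∈ S.image fun p => choiceExponent p.1 p.2, monomial μ (coeff μ w) :=
      Finset.sum_subset hsupp fun μ _ hμ => by rw [notMem_support_iff.mp hμ, monomial_zero]
    _ = ∑ p ∈ S, monomial (choiceExponent p.1 p.2) (coeff (choiceExponent p.1 p.2) w) :=
      Finset.sum_image hinj
    _ = ∑ p ∈ S, coeff (choiceExponent p.1 p.1) w • monomial (choiceExponent p.1 p.2) 1 := by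
      refine Finset.sum_congr rfl fun p hp => ?_
      rw [← mapDomain_fst_true_choiceExponent ((hS p).mp hp).2, coeff_mapDomain_fst_true hsf hd,
        smul_monomial, smul_eq_mul, mul_one]
    _ = _ := by
      simp only [S, Finset.sum_sigma, prod_X_add_X_eq_sum_monomial, Finset.smul_sum]

end Expansion

end MvPolynomial

/-- a homogeneous squarefree symmetric polynomial of degree `i`,
all of whose partial derivatives are symmetric, is a linear combination of
products `∏_{k ∈ τ} (x_k + x_{-k})` over `i`-element subsets `τ ⊆ [n]`. -/
theorem stmt_1 (n i : ℕ) (w : MvPolynomial (Fin n × Bool) ℝ)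
    (hhom : w.IsHomogeneous i)
    (hsf : ∀ m ∈ w.support, ∀ v, m v ≤ 1)
    (hsym : rename (fun v : Fin n × Bool => (v.1, !v.2)) w = w)
    (hdsym : ∀ v : Fin n × Bool,
      rename (fun u : Fin n × Bool => (u.1, !u.2)) (pderiv v w) = pderiv v w) :
    ∃ c : Finset (Fin n) → ℝ,
      w = ∑ τ ∈ (Finset.univ : Finset (Fin n)).powersetCard i,
        c τ • ∏ k ∈ τ, (X (k, true) + X (k, false)) :=
  ⟨_, eq_sum_smul_prod_X_add_X hhom hsf fun k => pderiv_false_eq_pderiv_true k hsym (hdsym _)⟩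
end

section
/- Let Δ be a centrally symmetric simplicial complex with involution v ↦ −v, and let w be a symmetric stress (a polynomial with α(w) = w, every monomial supported on a face of Δ) all of whose monomials are supported on the star of a vertex v. Then every monomial of w is supported on lk(v) ∩ lk(−v), the intersection of the links of v and −v. -/
/-!
The antipodal image of a monomial of `w` is again a monomial of `w`, so it also lies on the star of
`v`; mapping back, the monomial lies on the star of `-v` as well. In a centrally symmetric complex
the edge `{v, -v}` is not a face, so a face that can be extended by `v` cannot contain `-v`, and
one that can be extended by `-v` cannot contain `v`.
-/

open MvPolynomial

theorem MvPolynomial.mapDomain_mem_support_of_rename_eq {ι R : Type*} [CommSemiring R]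
    {f : ι → ι} (hf : Function.Injective f) {w : MvPolynomial ι R} (hw : rename f w = w)
    {m : ι →₀ ℕ} (hm : m ∈ w.support) : m.mapDomain f ∈ w.support := by
  rw [mem_support_iff, ← hw, coeff_rename_mapDomain f hf]
  exact mem_support_iff.1 hm

section Involution

variable {α : Type*} [DecidableEq α] {Δ : Finset (Finset α)} {σ : α → α}

theorem Finset.pair_notMem_of_image_ne (hσ : Function.Involutive σ)
    (hfree : ∀ s ∈ Δ, s ≠ ∅ → s.image σ ≠ s) (v : α) : {v, σ v} ∉ Δ := fun hmem =>
  hfree _ hmem (Finset.nonempty_iff_ne_empty.1 ⟨v, by simp⟩) <| by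
    rw [Finset.image_insert, Finset.image_singleton, hσ v, Finset.pair_comm]

theorem Finset.insert_mem_of_insert_image_mem (hσ : Function.Involutive σ)
    (hmap : ∀ s ∈ Δ, s.image σ ∈ Δ) {v : α} {s : Finset α} (h : insert v (s.image σ) ∈ Δ) :
    insert (σ v) s ∈ Δ := by
  simpa [Finset.image_insert, Finset.image_image, hσ.comp_self] using hmap _ h

theorem Finset.notMem_of_insert_mem_of_pair_notMem (hdown : ∀ s ∈ Δ, ∀ t ⊆ s, t ∈ Δ)
    {a b : α} {s : Finset α} (hs : insert a s ∈ Δ) (hab : {a, b} ∉ Δ) : b ∉ s := fun hb =>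
  hab <| hdown _ hs _ <| Finset.insert_subset_insert a (Finset.singleton_subset_iff.2 hb)

end Involution

theorem stmt_9_general (n : ℕ) (Δ : Finset (Finset (Fin n × Bool)))
    (hdown : ∀ s ∈ Δ, ∀ t ⊆ s, t ∈ Δ)
    (hmap : ∀ s ∈ Δ, s.image (fun u : Fin n × Bool => (u.1, !u.2)) ∈ Δ)
    (hfacefree : ∀ s ∈ Δ, s ≠ ∅ → s.image (fun u : Fin n × Bool => (u.1, !u.2)) ≠ s)
    (w : MvPolynomial (Fin n × Bool) ℝ)
    (hsym : rename (fun u : Fin n × Bool => (u.1, !u.2)) w = w)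
    (v : Fin n × Bool)
    (hstar : ∀ m ∈ w.support, insert v m.support ∈ Δ) :
    ∀ m ∈ w.support,
      (insert v m.support ∈ Δ ∧ v ∉ m.support) ∧
      (insert (v.1, !v.2) m.support ∈ Δ ∧ (v.1, !v.2) ∉ m.support) := by
  intro m hm
  have hσ : Function.Involutive fun u : Fin n × Bool => (u.1, !u.2) := fun u => by simp
  have hpair := Finset.pair_notMem_of_image_ne hσ hfacefree v
  have hflip : insert (v.1, !v.2) m.support ∈ Δ := by
    refine Finset.insert_mem_of_insert_image_mem hσ hmap ?_
    rw [← Finsupp.mapDomain_support_of_injective hσ.injective]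
    exact hstar _ (mapDomain_mem_support_of_rename_eq hσ.injective hsym hm)
  have hpair' : {(v.1, !v.2), v} ∉ Δ := by rwa [Finset.pair_comm]
  refine ⟨⟨hstar m hm, ?_⟩, hflip, ?_⟩
  · exact Finset.notMem_of_insert_mem_of_pair_notMem hdown hflip hpair'
  · exact Finset.notMem_of_insert_mem_of_pair_notMem hdown (hstar m hm) hpair

/-- in a centrally symmetric simplicial complex `Δ`, a symmetric
polynomial `w` (every monomial supported on a face of `Δ`) that lives on the
star of a vertex `v` in fact lives on `lk(v) ∩ lk(-v)`. -/
theorem stmt_9 (n : ℕ) (Δ : Finset (Finset (Fin n × Bool)))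
    (hdown : ∀ s ∈ Δ, ∀ t ⊆ s, t ∈ Δ)
    (hmap : ∀ s ∈ Δ, s.image (fun u : Fin n × Bool => (u.1, !u.2)) ∈ Δ)
    (hfacefree : ∀ s ∈ Δ, s ≠ ∅ → s.image (fun u : Fin n × Bool => (u.1, !u.2)) ≠ s)
    (w : MvPolynomial (Fin n × Bool) ℝ)
    (hsym : rename (fun u : Fin n × Bool => (u.1, !u.2)) w = w)
    (hsupp : ∀ m ∈ w.support, m.support ∈ Δ)
    (v : Fin n × Bool)
    (hstar : ∀ m ∈ w.support, insert v m.support ∈ Δ) :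
    ∀ m ∈ w.support,
      (insert v m.support ∈ Δ ∧ v ∉ m.support) ∧
      (insert (v.1, !v.2) m.support ∈ Δ ∧ (v.1, !v.2) ∉ m.support) :=
  stmt_9_general n Δ hdown hmap hfacefree w hsym v hstar
end

section
/- Let Δ be a centrally symmetric simplicial complex and w a homogeneous polynomial whose monomials are supported on faces of Δ. If for every vertex v of Δ, the partial derivative ∂w/∂x_v is symmetric under the involution α and supported on Δ, and α maps the support of ∂w/∂x_v into itself (i.e., ∂w/∂x_v is a symmetric stress), then w is squarefree, i.e., no monomial of w is divisible by the square of a variable. -/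
/-!
If some monomial `m` of `w` had `m v ≥ 2`, then `m - e_v` would be a monomial of `∂w/∂x_v`.
By symmetry of `∂w/∂x_v` so is its mirror image, and integrating back gives a monomial of `w`
divisible by both `x_v` and `x_{-v}`. Its support is a face of `Δ` containing the edge
`{v, -v}`, a nonempty face fixed by the involution, which is impossible.
-/

open MvPolynomial

namespace MvPolynomial

variable {R σ : Type*} [CommSemiring R]

theorem mem_support_pderiv_iff [CharZero R] [NoZeroDivisors R] {v : σ}
    {w : MvPolynomial σ R} {N : σ →₀ ℕ} :
    N ∈ (pderiv v w).support ↔ N + Finsupp.single v 1 ∈ w.support := by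
  classical
  simp only [mem_support_iff, coeff_pderiv, ne_eq, mul_eq_zero, not_or]
  exact and_iff_left (by exact_mod_cast Nat.succ_ne_zero (N v))

theorem exists_mem_support_of_rename_pderiv_eq [CharZero R] [NoZeroDivisors R]
    {f : σ → σ} (hf : Function.Injective f) {v : σ} {w : MvPolynomial σ R}
    (hsym : rename f (pderiv v w) = pderiv v w) {m : σ →₀ ℕ} (hm : m ∈ w.support)
    (hmv : 2 ≤ m v) : ∃ m' ∈ w.support, v ∈ m'.support ∧ f v ∈ m'.support := by
  classical
  set N := m - Finsupp.single v 1
  have hNm : N + Finsupp.single v 1 = m :=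
    tsub_add_cancel_of_le (Finsupp.single_le_iff.mpr (by omega))
  have hNv : 1 ≤ N v := by simp only [N, Finsupp.tsub_apply, Finsupp.single_eq_same]; omega
  have hN : N ∈ (pderiv v w).support := mem_support_pderiv_iff.mpr (hNm ▸ hm)
  have hfN : N.mapDomain f ∈ (pderiv v w).support := by
    rwa [← hsym, mem_support_iff, coeff_rename_mapDomain f hf, ← mem_support_iff]
  refine ⟨N.mapDomain f + Finsupp.single v 1, mem_support_pderiv_iff.mp hfN, ?_, ?_⟩
  · simp
  · rw [Finsupp.mem_support_iff, Finsupp.add_apply, Finsupp.mapDomain_apply hf]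
    omega

end MvPolynomial

theorem stmt_10_general (n : ℕ) (Δ : Finset (Finset (Fin n × Bool)))
    (hdown : ∀ s ∈ Δ, ∀ t ⊆ s, t ∈ Δ)
    (hfacefree : ∀ s ∈ Δ, s ≠ ∅ → s.image (fun u : Fin n × Bool => (u.1, !u.2)) ≠ s)
    (w : MvPolynomial (Fin n × Bool) ℝ)
    (hsupp : ∀ m ∈ w.support, m.support ∈ Δ)
    (hdsym : ∀ v : Fin n × Bool,
      rename (fun u : Fin n × Bool => (u.1, !u.2)) (pderiv v w) = pderiv v w) :
    ∀ m ∈ w.support, ∀ v, m v ≤ 1 := by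
  intro m hm v
  by_contra! hmv
  set α : Fin n × Bool → Fin n × Bool := fun u => (u.1, !u.2)
  have hα : Function.Involutive α := fun u => by simp [α]
  obtain ⟨m', hm', hv, hαv⟩ :=
    exists_mem_support_of_rename_pderiv_eq hα.injective (hdsym v) hm hmv
  have hedge : {v, α v} ∈ Δ :=
    hdown _ (hsupp m' hm') _ (Finset.insert_subset hv (Finset.singleton_subset_iff.mpr hαv))
  refine hfacefree _ hedge (Finset.insert_ne_empty _ _) ?_
  rw [Finset.image_insert, Finset.image_singleton, hα v, Finset.pair_comm]

/-- if every monomial of a homogeneous polynomial `w` is supported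
on a face of a centrally symmetric complex `Δ`, and for every vertex `v` the
partial derivative `∂w/∂x_v` is a symmetric stress (symmetric and supported on
`Δ`), then `w` is squarefree. -/
theorem stmt_10 (n i : ℕ) (Δ : Finset (Finset (Fin n × Bool)))
    (hdown : ∀ s ∈ Δ, ∀ t ⊆ s, t ∈ Δ)
    (hmap : ∀ s ∈ Δ, s.image (fun u : Fin n × Bool => (u.1, !u.2)) ∈ Δ)
    (hfacefree : ∀ s ∈ Δ, s ≠ ∅ → s.image (fun u : Fin n × Bool => (u.1, !u.2)) ≠ s)
    (w : MvPolynomial (Fin n × Bool) ℝ)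
    (hhom : w.IsHomogeneous i)
    (hsupp : ∀ m ∈ w.support, m.support ∈ Δ)
    (hdsym : ∀ v : Fin n × Bool,
      rename (fun u : Fin n × Bool => (u.1, !u.2)) (pderiv v w) = pderiv v w)
    (hdsupp : ∀ v : Fin n × Bool, ∀ m ∈ (pderiv v w).support, m.support ∈ Δ) :
    ∀ m ∈ w.support, ∀ v, m v ≤ 1 :=
  stmt_10_general n Δ hdown hfacefree w hsupp hdsym
end

section
/- Let Δ be a centrally symmetric simplicial complex on V ⊆ {±1,...,±n}, and let Θ = θ_1, ..., θ_ℓ be linear forms such that θ_1, ..., θ_{ℓ−1} satisfy α(θ_k) = −θ_k and θ_ℓ either satisfies α(θ_ℓ) = −θ_ℓ or equals ∑_{v∈V} x_v. Suppose that for some integer i > 1, every i-stress on Δ with respect to Θ is symmetric (fixed by α). Then every (i+1)-stress on Δ with respect to Θ is symmetric. -/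
open MvPolynomial

/-- The directional-derivative operator `∂_θ = ∑_v θ(v) ∂/∂x_v`. -/
noncomputable def Dop {V : Type*} [Fintype V] (θ : V → ℝ)
    (w : MvPolynomial V ℝ) : MvPolynomial V ℝ :=
  ∑ v : V, θ v • pderiv v w

/-- An `i`-stress on `Δ` w.r.t. the linear forms `Θ`. -/
def IsStress (n ℓ i : ℕ) (Δ : Finset (Finset (Fin n × Bool)))
    (Θ : Fin ℓ → (Fin n × Bool) → ℝ) (w : MvPolynomial (Fin n × Bool) ℝ) : Prop :=
  w.IsHomogeneous i ∧ (∀ m ∈ w.support, m.support ∈ Δ) ∧ ∀ k : Fin ℓ, Dop (Θ k) w = 0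

/-!
Put `u = α w - w`, an `(i+1)`-stress with `α u = -u`. Its first partials are `i`-stresses, hence
symmetric, which forces `∂_{αv} u = -∂_v u`. For `y ∉ {x, αx}` the polynomial
`(x_x + x_{αx} - x_y - x_{αy}) · ∂_x ∂_y u` is again an `i`-stress, but it is antisymmetric, so it
vanishes and `∂_x ∂_y u = 0`. Since no face contains both `x` and `αx`, also `∂_x ∂_{αx} u = 0`,
and then `∂_x ∂_x u = -∂_x ∂_{αx} u = 0`. A homogeneous polynomial of degree at least two whose
second partials all vanish is zero by Euler's identity, so `u = 0`.
-/

namespace MvPolynomial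

variable {σ R : Type*}

section CommSemiring

variable [CommSemiring R]

theorem coeff_X_mul_pderiv (i : σ) (f : MvPolynomial σ R) (m : σ →₀ ℕ) :
    coeff m (X i * pderiv i f) = m i * coeff m f := by
  classical
  induction f using induction_on' with
  | monomial s a =>
    rw [X_mul_pderiv_monomial, coeff_smul, coeff_monomial]
    split_ifs with h <;> simp [h, nsmul_eq_mul]
  | add p q hp hq => simp only [map_add, mul_add, coeff_add, hp, hq]

theorem support_X_mul_pderiv_subset (i : σ) (f : MvPolynomial σ R) :
    (X i * pderiv i f).support ⊆ f.support := fun m hm => by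
  rw [mem_support_iff] at hm ⊢
  rw [coeff_X_mul_pderiv] at hm
  exact right_ne_zero_of_mul hm

theorem pderiv_pderiv_eq_zero_of_forall_mem_support {f : MvPolynomial σ R} {i j : σ}
    (h : ∀ m ∈ f.support, m i = 0 ∨ m j = 0) : pderiv i (pderiv j f) = 0 := by
  ext m
  rw [coeff_pderiv, coeff_pderiv, coeff_zero]
  by_cases hm : m + Finsupp.single i 1 + Finsupp.single j 1 ∈ f.support
  · rcases h _ hm with h | h <;> simp at h
  · rw [notMem_support_iff.mp hm, zero_mul, zero_mul]

end CommSemiring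

theorem pderiv_comm [CommRing R] (i j : σ) (f : MvPolynomial σ R) :
    pderiv i (pderiv j f) = pderiv j (pderiv i f) := by
  have h : ⁅pderiv i, pderiv j⁆ = (0 : Derivation R (MvPolynomial σ R) (MvPolynomial σ R)) :=
    derivation_ext fun k => by
      classical
      rw [Derivation.commutator_apply, pderiv_X, pderiv_X, Pi.single_apply, Pi.single_apply]
      split_ifs <;> simp
  simpa [Derivation.commutator_apply, sub_eq_zero] using congr($h f)

section Homogeneous

variable [CommRing R] [IsDomain R] [CharZero R] [Fintype σ] {f : MvPolynomial σ R} {n : ℕ}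

theorem IsHomogeneous.eq_zero_of_forall_pderiv_eq_zero (hf : f.IsHomogeneous n) (hn : n ≠ 0)
    (h : ∀ i, pderiv i f = 0) : f = 0 := by
  have euler := hf.sum_X_mul_pderiv
  simp only [h, mul_zero, Finset.sum_const_zero] at euler
  exact (smul_eq_zero.mp euler.symm).resolve_left hn

theorem IsHomogeneous.eq_zero_of_forall_pderiv_pderiv_eq_zero (hf : f.IsHomogeneous n)
    (hn : 2 ≤ n) (h : ∀ i j, pderiv i (pderiv j f) = 0) : f = 0 :=
  hf.eq_zero_of_forall_pderiv_eq_zero (by omega) fun j =>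
    hf.pderiv.eq_zero_of_forall_pderiv_eq_zero (by omega) (h · j)

end Homogeneous

end MvPolynomial

section Dop

variable {V : Type*} [Fintype V]

theorem Dop_sub (θ : V → ℝ) (f g : MvPolynomial V ℝ) : Dop θ (f - g) = Dop θ f - Dop θ g := by
  simp only [Dop, map_sub, smul_sub, Finset.sum_sub_distrib]

theorem Dop_add (θ : V → ℝ) (f g : MvPolynomial V ℝ) : Dop θ (f + g) = Dop θ f + Dop θ g := by
  simp only [Dop, map_add, smul_add, Finset.sum_add_distrib]

theorem Dop_mul (θ : V → ℝ) (f g : MvPolynomial V ℝ) :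
    Dop θ (f * g) = Dop θ f * g + f * Dop θ g := by
  simp only [Dop, pderiv_mul, smul_add, Finset.sum_add_distrib, Finset.sum_mul, Finset.mul_sum,
    smul_mul_assoc, mul_smul_comm]

theorem Dop_neg (θ : V → ℝ) (f : MvPolynomial V ℝ) : Dop (-θ) f = -Dop θ f := by
  simp only [Dop, Pi.neg_apply, neg_smul, Finset.sum_neg_distrib]

theorem Dop_X (θ : V → ℝ) (v : V) : Dop θ (X v) = C (θ v) := by
  classical
  simp [Dop, pderiv_X, Pi.single_apply, smul_eq_C_mul]

theorem pderiv_Dop (θ : V → ℝ) (v : V) (f : MvPolynomial V ℝ) :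
    pderiv v (Dop θ f) = Dop θ (pderiv v f) := by
  simp only [Dop, map_sum, Derivation.map_smul, pderiv_comm v]

theorem Dop_rename_of_involutive {σ : V → V} (hσ : Function.Involutive σ) (θ : V → ℝ)
    (f : MvPolynomial V ℝ) : Dop θ (rename σ f) = rename σ (Dop (θ ∘ σ) f) := by
  simp only [Dop, map_sum, map_smul, Function.comp_apply]
  refine (Fintype.sum_bijective σ hσ.bijective _ _ fun v => ?_).symm
  rw [pderiv_rename hσ.injective]

end Dop

def FaceSupported {V R : Type*} [CommSemiring R] (Δ : Finset (Finset V))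
    (f : MvPolynomial V R) : Prop :=
  ∀ m ∈ f.support, m.support ∈ Δ

namespace FaceSupported

variable {V R : Type*} {Δ : Finset (Finset V)}

section CommSemiring

variable [CommSemiring R] {f g : MvPolynomial V R}

theorem mono (hf : FaceSupported Δ f) (hgf : g.support ⊆ f.support) : FaceSupported Δ g :=
  fun m hm => hf m (hgf hm)

theorem X_mul_pderiv (hf : FaceSupported Δ f) (i : V) : FaceSupported Δ (X i * pderiv i f) :=
  hf.mono (support_X_mul_pderiv_subset i f)

theorem pderiv (hdown : ∀ s ∈ Δ, ∀ t ⊆ s, t ∈ Δ) (hf : FaceSupported Δ f) (i : V) :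
    FaceSupported Δ (pderiv i f) := fun m hm => by
  have hm' : m + Finsupp.single i 1 ∈ f.support := by
    rw [mem_support_iff, coeff_pderiv] at hm
    exact mem_support_iff.mpr (left_ne_zero_of_mul hm)
  refine hdown _ (hf _ hm') _ fun v hv => ?_
  rw [Finsupp.mem_support_iff] at hv ⊢
  simp [hv]

theorem rename [DecidableEq V] {e : V → V} (he : Function.Injective e)
    (hmap : ∀ s ∈ Δ, s.image e ∈ Δ) (hf : FaceSupported Δ f) :
    FaceSupported Δ (rename e f) := fun m hm => by
  rw [support_rename_of_injective he] at hm
  obtain ⟨m₀, hm₀, rfl⟩ := Finset.mem_image.mp hm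
  rw [Finsupp.mapDomain_support_of_injective he]
  exact hmap _ (hf m₀ hm₀)

end CommSemiring

theorem sub [CommRing R] {f g : MvPolynomial V R} (hf : FaceSupported Δ f)
    (hg : FaceSupported Δ g) : FaceSupported Δ (f - g) := fun m hm => by
  classical
  exact (Finset.mem_union.mp (support_sub V f g hm)).elim (hf m) (hg m)

end FaceSupported

def antipode {n : ℕ} (v : Fin n × Bool) : Fin n × Bool := (v.1, !v.2)

theorem antipode_involutive {n : ℕ} : Function.Involutive (antipode (n := n)) := fun v => by
  simp [antipode]

theorem antipode_ne {n : ℕ} (v : Fin n × Bool) : antipode v ≠ v := by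
  simp [antipode, Prod.ext_iff]

theorem pderiv_eq_neg_of_rename_eq_neg {V R : Type*} [CommRing R] {σ : V → V}
    (hσ : Function.Injective σ) {u : MvPolynomial V R} (hu : rename σ u = -u) {v : V}
    (hv : rename σ (pderiv v u) = pderiv v u) : pderiv (σ v) u = -pderiv v u := by
  rw [← pderiv_rename hσ, hu, map_neg] at hv
  rw [← hv, neg_neg]

theorem antipode_notMem_of_mem {n : ℕ} {Δ : Finset (Finset (Fin n × Bool))}
    (hdown : ∀ s ∈ Δ, ∀ t ⊆ s, t ∈ Δ) (hfacefree : ∀ s ∈ Δ, s ≠ ∅ → s.image antipode ≠ s)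
    {s : Finset (Fin n × Bool)} (hs : s ∈ Δ) {v : Fin n × Bool} (hv : v ∈ s) :
    antipode v ∉ s := fun hav => by
  have hpair : {v, antipode v} ∈ Δ := hdown s hs _ (Finset.insert_subset hv (by simpa using hav))
  refine hfacefree _ hpair (Finset.insert_ne_empty _ _) ?_
  rw [Finset.image_insert, Finset.image_singleton, antipode_involutive v, Finset.pair_comm]

theorem FaceSupported.pderiv_pderiv_antipode {n : ℕ} {Δ : Finset (Finset (Fin n × Bool))}
    (hdown : ∀ s ∈ Δ, ∀ t ⊆ s, t ∈ Δ) (hfacefree : ∀ s ∈ Δ, s ≠ ∅ → s.image antipode ≠ s)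
    {f : MvPolynomial (Fin n × Bool) ℝ} (hf : FaceSupported Δ f) (v : Fin n × Bool) :
    MvPolynomial.pderiv v (MvPolynomial.pderiv (antipode v) f) = 0 :=
  pderiv_pderiv_eq_zero_of_forall_mem_support fun m hm => by
    by_contra! h
    exact antipode_notMem_of_mem hdown hfacefree (hf m hm) (Finsupp.mem_support_iff.mpr h.1)
      (Finsupp.mem_support_iff.mpr h.2)

theorem Dop_X_add_X_antipode_sub {n : ℕ} {θ : Fin n × Bool → ℝ}
    (hθ : (∀ v, θ (antipode v) = -θ v) ∨ ∀ v, θ v = 1) (x y : Fin n × Bool) :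
    Dop θ (X x + X (antipode x) - (X y + X (antipode y))) = 0 := by
  simp only [Dop_sub, Dop_add, Dop_X, ← C_add, ← C_sub]
  rcases hθ with hθ | hθ <;> simp [hθ]

namespace IsStress

variable {n ℓ j : ℕ} {Δ : Finset (Finset (Fin n × Bool))} {Θ : Fin ℓ → Fin n × Bool → ℝ}
  {f g : MvPolynomial (Fin n × Bool) ℝ}

theorem faceSupported (hf : IsStress n ℓ j Δ Θ f) : FaceSupported Δ f :=
  hf.2.1

theorem sub (hf : IsStress n ℓ j Δ Θ f) (hg : IsStress n ℓ j Δ Θ g) :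
    IsStress n ℓ j Δ Θ (f - g) :=
  ⟨hf.1.sub hg.1, hf.faceSupported.sub hg.faceSupported,
    fun k => by rw [Dop_sub, hf.2.2 k, hg.2.2 k, sub_zero]⟩

theorem pderiv (hdown : ∀ s ∈ Δ, ∀ t ⊆ s, t ∈ Δ) (hf : IsStress n ℓ (j + 1) Δ Θ f)
    (v : Fin n × Bool) : IsStress n ℓ j Δ Θ (pderiv v f) :=
  ⟨hf.1.pderiv, hf.faceSupported.pderiv hdown v,
    fun k => by rw [← pderiv_Dop, hf.2.2 k, map_zero]⟩

theorem rename_antipode (hmap : ∀ s ∈ Δ, s.image antipode ∈ Δ)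
    (hΘ : ∀ k, (∀ v, Θ k (antipode v) = -Θ k v) ∨ ∀ v, Θ k v = 1)
    (hf : IsStress n ℓ j Δ Θ f) : IsStress n ℓ j Δ Θ (rename antipode f) := by
  refine ⟨hf.1.rename_isHomogeneous,
    hf.faceSupported.rename antipode_involutive.injective hmap, fun k => ?_⟩
  rw [Dop_rename_of_involutive antipode_involutive]
  rcases hΘ k with hk | hk
  · rw [show Θ k ∘ antipode = -Θ k from funext hk, Dop_neg, hf.2.2 k, neg_zero, map_zero]
  · rw [show Θ k ∘ antipode = Θ k from funext fun v => by simp [hk], hf.2.2 k, map_zero]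

end IsStress

theorem pderiv_pderiv_eq_zero_of_ne_of_ne_antipode {n ℓ i : ℕ} (hi : 1 ≤ i)
    {Δ : Finset (Finset (Fin n × Bool))} (hdown : ∀ s ∈ Δ, ∀ t ⊆ s, t ∈ Δ)
    {Θ : Fin ℓ → Fin n × Bool → ℝ}
    (hΘ : ∀ k, (∀ v, Θ k (antipode v) = -Θ k v) ∨ ∀ v, Θ k v = 1)
    (hsym : ∀ w, IsStress n ℓ i Δ Θ w → rename antipode w = w)
    {u : MvPolynomial (Fin n × Bool) ℝ} (hu : IsStress n ℓ (i + 1) Δ Θ u)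
    (hanti : ∀ v, pderiv (antipode v) u = -pderiv v u)
    {x y : Fin n × Bool} (hyx : y ≠ x) (hyax : y ≠ antipode x) :
    pderiv x (pderiv y u) = 0 := by
  obtain ⟨j, rfl⟩ : ∃ j, i = j + 1 := ⟨i - 1, by omega⟩
  set h := pderiv x (pderiv y u) with h_def
  set s : MvPolynomial (Fin n × Bool) ℝ := X x + X (antipode x) - (X y + X (antipode y))
    with s_def
  have hh : IsStress n ℓ j Δ Θ h := (hu.pderiv hdown y).pderiv hdown x
  have h_antipode : rename antipode h = -h := by
    rw [h_def, ← pderiv_rename antipode_involutive.injective, hsym _ (hu.pderiv hdown y),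
      pderiv_comm, hanti, map_neg, pderiv_comm]
  have s_antipode : rename antipode s = s := by
    simp only [s_def, map_add, map_sub, rename_X, antipode_involutive _]
    ring
  have s_ne_zero : s ≠ 0 := by
    have hyx' : antipode y ≠ x := fun hax => hyax (hax ▸ (antipode_involutive y).symm)
    have : pderiv x s = 1 := by
      simp [s_def, pderiv_X_of_ne (antipode_ne x), pderiv_X_of_ne hyx, pderiv_X_of_ne hyx']
    intro hs
    simp [hs] at this
  have hsh : IsStress n ℓ (j + 1) Δ Θ (s * h) := by
    refine ⟨?_, ?_, fun k => by rw [Dop_mul, Dop_X_add_X_antipode_sub (hΘ k), hh.2.2 k]; simp⟩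
    · have hs : s.IsHomogeneous 1 := ((isHomogeneous_X _ _).add (isHomogeneous_X _ _)).sub
        ((isHomogeneous_X _ _).add (isHomogeneous_X _ _))
      simpa [add_comm] using hs.mul hh.1
    · -- each term of `s * h` is `± X z * ∂_z` of a first partial of `u`
      have hexpand : s * h = X x * pderiv x (pderiv y u)
          - X (antipode x) * pderiv (antipode x) (pderiv y u)
          - (X y * pderiv y (pderiv x u) - X (antipode y) * pderiv (antipode y) (pderiv x u)) := by
        rw [pderiv_comm (antipode x), hanti, pderiv_comm (antipode y), hanti, map_neg, map_neg,
          pderiv_comm y x]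
        ring
      have hfy := (hu.pderiv hdown y).faceSupported
      have hfx := (hu.pderiv hdown x).faceSupported
      rw [hexpand]
      exact (FaceSupported.sub (hfy.X_mul_pderiv x) (hfy.X_mul_pderiv _)).sub
        ((hfx.X_mul_pderiv y).sub (hfx.X_mul_pderiv _))
  have hsh_antipode := hsym _ hsh
  rw [map_mul, s_antipode, h_antipode, mul_neg, neg_eq_iff_eq_neg, CharZero.eq_neg_self_iff]
    at hsh_antipode
  exact (mul_eq_zero.mp hsh_antipode).resolve_left s_ne_zero

/-- main theorem: let `Δ` be a centrally symmetric simplicial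
complex and `Θ = θ_1, …, θ_ℓ` linear forms with `θ_1, …, θ_{ℓ-1}` anti-symmetric
under `α` and `θ_ℓ` either anti-symmetric or equal to `∑_v x_v`. If for some
`i > 1` every `i`-stress on `Δ` w.r.t. `Θ` is symmetric, then every
`(i+1)`-stress on `Δ` w.r.t. `Θ` is symmetric. -/
theorem stmt_15 (n ℓ i : ℕ) (hi : 1 < i) (Δ : Finset (Finset (Fin n × Bool)))
    (hdown : ∀ s ∈ Δ, ∀ t ⊆ s, t ∈ Δ)
    (hmap : ∀ s ∈ Δ, s.image (fun u : Fin n × Bool => (u.1, !u.2)) ∈ Δ)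
    (hfacefree : ∀ s ∈ Δ, s ≠ ∅ → s.image (fun u : Fin n × Bool => (u.1, !u.2)) ≠ s)
    (Θ : Fin ℓ → (Fin n × Bool) → ℝ)
    (hΘ : ∀ k : Fin ℓ, (∀ v : Fin n × Bool, Θ k (v.1, !v.2) = - Θ k v) ∨
                       ((k : ℕ) = ℓ - 1 ∧ ∀ v : Fin n × Bool, Θ k v = 1))
    (hsym : ∀ w, IsStress n ℓ i Δ Θ w →
      rename (fun v : Fin n × Bool => (v.1, !v.2)) w = w) :
    ∀ w, IsStress n ℓ (i + 1) Δ Θ w →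
      rename (fun v : Fin n × Bool => (v.1, !v.2)) w = w := by
  intro w hw
  have hΘ' : ∀ k, (∀ v, Θ k (antipode v) = -Θ k v) ∨ ∀ v, Θ k v = 1 :=
    fun k => (hΘ k).imp_right And.right
  set u := rename antipode w - w
  have hu : IsStress n ℓ (i + 1) Δ Θ u := (hw.rename_antipode hmap hΘ').sub hw
  have u_antipode : rename antipode u = -u := by
    rw [map_sub, rename_rename, antipode_involutive.comp_self, rename_id_apply, neg_sub]
  have hanti : ∀ v, pderiv (antipode v) u = -pderiv v u := fun v =>
    pderiv_eq_neg_of_rename_eq_neg antipode_involutive.injective u_antipode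
      (hsym _ (hu.pderiv hdown v))
  have hsecond : ∀ x y, pderiv x (pderiv y u) = 0 := by
    intro x y
    have hxax := hu.faceSupported.pderiv_pderiv_antipode hdown hfacefree x
    by_cases hyx : y = x
    · rw [hyx, ← neg_neg (pderiv x u), ← hanti, map_neg, hxax, neg_zero]
    by_cases hyax : y = antipode x
    · rw [hyax, hxax]
    exact pderiv_pderiv_eq_zero_of_ne_of_ne_antipode hi.le hdown hΘ' hsym hu hanti hyx hyax
  exact sub_eq_zero.mp (hu.1.eq_zero_of_forall_pderiv_pderiv_eq_zero (by omega) hsecond)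
end
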